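/- arXiv:2005.12457 — 2 statements merged into one kernel-verified Lean document; each statement's English description precedes it below -/
import Mathlib

section
/- Let n and s be positive integers, let m be an integer coprime to n, and let 𝒜 = (Ā_1,…,Ā_s) be local monodromy data of rank ℓ and order n. Let 𝒜^{(m)} = (Ā'_1,…,Ā'_s) be the local monodromy data of rank ℓ and order n determined by the condition that, for every a ∈ {0,1,…,n−1} and every i, the multiplicity of exp(2π√−1·(m·a mod n)/n) as an eigenvalue of Ā'_i equals the multiplicity of exp(2π√−1·a/n) as an eigenvalue of Ā_i. Then v(𝒜^{(m)}) = T_m(v(𝒜)). -/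
open Matrix Complex BigOperators

/-- Square complex matrices of size `ℓ`. -/
abbrev Mat (ℓ : ℕ) : Type := Matrix (Fin ℓ) (Fin ℓ) ℂ

/-- The (ordered) product `A 0 * A 1 * ⋯ * A (s-1)` of a tuple of matrices. -/
noncomputable def tupleProd {s ℓ : ℕ} (A : Fin s → Mat ℓ) : Mat ℓ := (List.ofFn A).prod

/-- `B` is conjugate to `A` in `GL(ℓ, ℂ)`. -/
def ConjGL {ℓ : ℕ} (A B : Mat ℓ) : Prop :=
  ∃ C : Mat ℓ, IsUnit C ∧ B = C * A * C⁻¹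

/-- Every matrix of the tuple lies in the unitary group `U(ℓ)`. -/
def UnitaryTuple {s ℓ : ℕ} (A : Fin s → Mat ℓ) : Prop :=
  ∀ i, A i ∈ Matrix.unitaryGroup (Fin ℓ) ℂ

/-- The tuple is irreducible: the only subspaces of `ℂ^ℓ` invariant under all `A i`
are `0` and `ℂ^ℓ`. -/
def IrredTuple {s ℓ : ℕ} (A : Fin s → Mat ℓ) : Prop :=
  ∀ W : Submodule ℂ (Fin ℓ → ℂ),
    (∀ i, W.map (Matrix.mulVecLin (A i)) ≤ W) → W = ⊥ ∨ W = ⊤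

/-- The tuple is rigid in the sense of Katz: any tuple of invertible matrices with
product `1` whose members are individually conjugate to the `A i` is simultaneously
conjugate to `(A i)` by a single invertible matrix. -/
def RigidTuple {s ℓ : ℕ} (A : Fin s → Mat ℓ) : Prop :=
  ∀ B : Fin s → Mat ℓ, (∀ i, IsUnit (B i)) → tupleProd B = 1 →
    (∀ i, ConjGL (A i) (B i)) →
    ∃ C : Mat ℓ, IsUnit C ∧ ∀ i, B i = C * A i * C⁻¹

/-- The group generated by the `A i` is finite (stated via the submonoid closure,
which coincides with the group closure since all `A i` have finite order). -/
def FiniteMonodromy {s ℓ : ℕ} (A : Fin s → Mat ℓ) : Prop :=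
  Set.Finite ((Submonoid.closure (Set.range A) : Submonoid (Mat ℓ)) : Set (Mat ℓ))

/-- `α` is an eigenvalue of the matrix `A`. -/
def IsEigenvalue {ℓ : ℕ} (A : Mat ℓ) (α : ℂ) : Prop :=
  ∃ v : Fin ℓ → ℂ, v ≠ 0 ∧ A.mulVec v = α • v

/-- Membership in `SU(n)`. -/
def memSU {n : ℕ} (A : Mat n) : Prop :=
  A ∈ Matrix.unitaryGroup (Fin n) ℂ ∧ A.det = 1

/-- The diagonal matrix with entries `exp(2π √-1 a j)`. -/
noncomputable def diagOf {n : ℕ} (a : Fin n → ℝ) : Mat n :=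
  Matrix.diagonal fun j => Complex.exp (((2 * Real.pi * a j : ℝ) : ℂ) * Complex.I)

/-- `A` lies in the conjugacy class of `SU(n)` corresponding to `a ∈ Δ_n`. -/
def inClassOf {n : ℕ} (a : Fin n → ℝ) (A : Mat n) : Prop :=
  ∃ C : Mat n, memSU C ∧ A = C * diagOf a * C⁻¹

/-- The simplex `Δ_n = {a : a_1 ≥ ⋯ ≥ a_n ≥ a_1 - 1, ∑ a_i = 0}`. -/
def DeltaSet (n : ℕ) : Set (Fin n → ℝ) :=
  {a | Antitone a ∧ (∀ i j : Fin n, a i - a j ≤ 1) ∧ ∑ i, a i = 0}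

/-- The multiplicative eigenvalue polytope `P_n(s) ⊆ Δ_n^s`. -/
def Pset (n s : ℕ) : Set (Fin s → Fin n → ℝ) :=
  {a | (∀ i, a i ∈ DeltaSet n) ∧
    ∃ A : Fin s → Mat n, (∀ i, inClassOf (a i) (A i)) ∧ tupleProd A = 1}

/-- `a` is an F-vertex of `P_n(s)`: a vertex (extreme point) such that the
corresponding matrix equation in `SU(n)` has a unique solution up to conjugacy. -/
def IsFVertex (n s : ℕ) (a : Fin s → Fin n → ℝ) : Prop :=
  a ∈ Set.extremePoints ℝ (Pset n s) ∧
  ∀ A A' : Fin s → Mat n,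
    (∀ i, inClassOf (a i) (A i)) → tupleProd A = 1 →
    (∀ i, inClassOf (a i) (A' i)) → tupleProd A' = 1 →
    ∃ C : Mat n, memSU C ∧ ∀ i, A' i = C * A i * C⁻¹

/-- Local monodromy data of rank `ℓ` and order `n` for an `s`-punctured sphere: an
`s`-tuple of semisimple conjugacy classes in `GL(ℓ,ℂ)` with `n`-th power the identity
(recorded by the exponents `μ i` of the eigenvalues `exp(2π √-1 μ^i_j / n)`,
with `n > μ^i_1 ≥ ⋯ ≥ μ^i_ℓ ≥ 0`) whose determinants multiply to `1`. -/
structure MonodromyData (n s ℓ : ℕ) where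
  μ : Fin s → Fin ℓ → ℕ
  antitone : ∀ i, Antitone (μ i)
  lt_n : ∀ i j, μ i j < n
  det_one : (n : ℤ) ∣ ∑ i : Fin s, ∑ j : Fin ℓ, (μ i j : ℤ)

/-- A diagonal representative of the `i`-th conjugacy class of the data. -/
noncomputable def dataDiag {n s ℓ : ℕ} (𝒜 : MonodromyData n s ℓ) (i : Fin s) : Mat ℓ :=
  Matrix.diagonal fun j =>
    Complex.exp (((2 * Real.pi * (𝒜.μ i j : ℝ) / n : ℝ) : ℂ) * Complex.I)

/-- The tuple `A` realizes the local monodromy data `𝒜`: each `A i` lies in the `i`-th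
conjugacy class and the product of the `A i` is the identity. -/
def Realizes {n s ℓ : ℕ} (𝒜 : MonodromyData n s ℓ) (A : Fin s → Mat ℓ) : Prop :=
  (∀ i, ConjGL (dataDiag 𝒜 i) (A i)) ∧ tupleProd A = 1

/-- The point `v(𝒜) ∈ Δ_n^s`, where `λ^i_k = #{j : μ^i_j ≥ k}` is the transposed Young
diagram and `a^i = (1/ℓ)(λ^i − (|λ^i|/n)(1,…,1))`. -/
noncomputable def vOf {n s ℓ : ℕ} (𝒜 : MonodromyData n s ℓ) : Fin s → Fin n → ℝ :=
  fun i k =>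
    (((Finset.univ.filter fun j : Fin ℓ => k.val + 1 ≤ 𝒜.μ i j).card : ℝ)
      - (∑ k' : Fin n,
          ((Finset.univ.filter fun j : Fin ℓ => k'.val + 1 ≤ 𝒜.μ i j).card : ℝ)) / (n : ℝ))
      / (ℓ : ℝ)

/-- `b = T_m(a)`: `b` lies in `Δ_n`, and `b_r − b_{r+1} = a_i − a_{i+1}` whenever
`1 ≤ i, r ≤ n−1` and `r ≡ m·i (mod n)` (indices here are `1`-based as in the paper). -/
def TmRel (n m : ℕ) (a b : Fin n → ℝ) : Prop :=
  b ∈ DeltaSet n ∧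
  ∀ (i r : ℕ) (_ : 1 ≤ i) (hi' : i < n) (_ : 1 ≤ r) (hr' : r < n),
    (m * i) % n = r →
    b ⟨r - 1, by omega⟩ - b ⟨r, hr'⟩ = a ⟨i - 1, by omega⟩ - a ⟨i, hi'⟩


/-! The difference `λ^i_k − λ^i_{k+1}` of the transposed Young diagram is the multiplicity of the
exponent `k` in `μ^i`, so consecutive differences of `v(𝒜)^i` are these multiplicities divided
by `ℓ`. The twist moves the multiplicity of `a` to `m·a mod n`, which is how `T_m` moves the
difference at `a` to the one at `m·a mod n`. -/

open Finset

theorem Finset.card_filter_le_eq_card_filter_succ_le_add {ι : Type*} (s : Finset ι)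
    (f : ι → ℕ) (r : ℕ) :
    #{j ∈ s | r ≤ f j} = #{j ∈ s | r + 1 ≤ f j} + #{j ∈ s | f j = r} := by
  rw [← card_filter_add_card_filter_not (s := {j ∈ s | r ≤ f j}) (fun j => r + 1 ≤ f j),
    filter_filter, filter_filter]
  congr 2 <;> exact filter_congr fun j _ => by omega

namespace MonodromyData

variable {n s ℓ : ℕ} (𝒜 : MonodromyData n s ℓ) (i : Fin s)

theorem vOf_sub_vOf (k k' : Fin n) :
    vOf 𝒜 i k - vOf 𝒜 i k' =
      ((#{j | k.val + 1 ≤ 𝒜.μ i j} : ℝ) - #{j | k'.val + 1 ≤ 𝒜.μ i j}) / ℓ := by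
  unfold vOf
  ring

theorem sum_vOf : ∑ k, vOf 𝒜 i k = 0 := by
  rcases Nat.eq_zero_or_pos n with rfl | hn
  · simp
  unfold vOf
  rw [← sum_div, sum_sub_distrib, sum_const, card_univ, Fintype.card_fin, nsmul_eq_mul,
    mul_div_cancel₀ _ (by positivity : (n : ℝ) ≠ 0), sub_self, zero_div]

theorem vOf_mem_DeltaSet : vOf 𝒜 i ∈ DeltaSet n := by
  refine ⟨fun k k' hkk' => ?_, fun k k' => ?_, 𝒜.sum_vOf i⟩
  · rw [← sub_nonneg, vOf_sub_vOf]
    refine div_nonneg (sub_nonneg.2 ?_) (Nat.cast_nonneg ℓ)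
    have hkk' : k.val ≤ k'.val := hkk'
    exact_mod_cast card_le_card (monotone_filter_right _ fun j h => by omega)
  · rw [vOf_sub_vOf]
    refine div_le_one_of_le₀ ?_ (Nat.cast_nonneg (α := ℝ) ℓ)
    have hk : (#{j | k.val + 1 ≤ 𝒜.μ i j} : ℝ) ≤ ℓ := by
      exact_mod_cast (card_filter_le _ _).trans_eq (card_fin ℓ)
    linarith [(Nat.cast_nonneg _ : (0 : ℝ) ≤ #{j | k'.val + 1 ≤ 𝒜.μ i j})]

theorem vOf_pred_sub_vOf {r : ℕ} (hr : 1 ≤ r) (hrn : r < n) :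
    vOf 𝒜 i ⟨r - 1, by omega⟩ - vOf 𝒜 i ⟨r, hrn⟩ = #{j | 𝒜.μ i j = r} / ℓ := by
  rw [vOf_sub_vOf, Nat.sub_add_cancel hr, card_filter_le_eq_card_filter_succ_le_add _ (𝒜.μ i) r]
  push_cast
  ring

end MonodromyData

theorem vOf_Galois_twist_general (n s ℓ m : ℕ)
    (𝒜 𝒜' : MonodromyData n s ℓ)
    (hmult : ∀ i : Fin s, ∀ a : ℕ, a < n →
      (Finset.univ.filter fun j : Fin ℓ => 𝒜'.μ i j = (m * a) % n).card =
      (Finset.univ.filter fun j : Fin ℓ => 𝒜.μ i j = a).card) :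
    ∀ i : Fin s, TmRel n m (vOf 𝒜 i) (vOf 𝒜' i) := by
  intro i
  refine ⟨𝒜'.vOf_mem_DeltaSet i, fun a r ha han hr hrn hmr => ?_⟩
  rw [𝒜'.vOf_pred_sub_vOf i hr hrn, 𝒜.vOf_pred_sub_vOf i ha han, ← hmr, hmult i a han]

/-- **Theorem (Statement 6).** If `𝒜'` is obtained from `𝒜` by the Galois twist sending
the eigenvalue `exp(2π√-1 a/n)` (with multiplicity) to `exp(2π√-1 (m·a mod n)/n)`, then
`v(𝒜') = T_m(v(𝒜))`. -/
theorem vOf_Galois_twist (n s ℓ m : ℕ) (hn : 0 < n) (hs : 0 < s) (hℓ : 0 < ℓ)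
    (hm : 0 < m) (hcop : Nat.Coprime m n)
    (𝒜 𝒜' : MonodromyData n s ℓ)
    (hmult : ∀ i : Fin s, ∀ a : ℕ, a < n →
      (Finset.univ.filter fun j : Fin ℓ => 𝒜'.μ i j = (m * a) % n).card =
      (Finset.univ.filter fun j : Fin ℓ => 𝒜.μ i j = a).card) :
    ∀ i : Fin s, TmRel n m (vOf 𝒜 i) (vOf 𝒜' i) :=
  vOf_Galois_twist_general n s ℓ m 𝒜 𝒜' hmult
end

section
/- If (A_1,A_2,A_3) is a tuple of matrices in the unitary group U(ℓ) with A_1A_2A_3 = I_ℓ and A_i^2 = I_ℓ for i = 1,2,3, which is irreducible and rigid, then ℓ = 1. In other words, there are no unitary irreducible rigid local systems of rank greater than one on the 3-punctured sphere all of whose local monodromies have eigenvalues ±1. -/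
open Matrix Complex BigOperators

/-! If `a b c = 1` with `a² = b² = 1` then `c = b a`, and `c² = 1` then says that `a` and `b`
commute. Two commuting complex matrices have a common eigenvector `v`; it is also an eigenvector
of `c = b a`, so the line `ℂ v` is invariant under the whole tuple, and irreducibility forces it
to be all of `ℂ^ℓ`. -/

theorem Module.End.exists_common_eigenvector_of_commute {K V : Type*} [Field K] [IsAlgClosed K]
    [AddCommGroup V] [Module K V] [FiniteDimensional K V] [Nontrivial V] {f g : End K V}
    (h : Commute f g) : ∃ v ≠ 0, ∃ μ ν : K, f v = μ • v ∧ g v = ν • v := by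
  obtain ⟨μ, hμ⟩ := f.exists_eigenvalue
  have hE : Set.MapsTo g (f.eigenspace μ) (f.eigenspace μ) :=
    f.mapsTo_genEigenspace_of_comm h μ 1
  have : Nontrivial (f.eigenspace μ) := Submodule.nontrivial_iff_ne_bot.mpr hμ
  obtain ⟨ν, hν⟩ := Module.End.exists_eigenvalue (g.restrict hE)
  obtain ⟨w, hw⟩ := hν.exists_hasEigenvector
  refine ⟨w, by simpa using hw.2, μ, ν, mem_eigenspace_iff.mp w.2, ?_⟩
  exact congrArg Subtype.val hw.apply_eq_smul

theorem eq_mul_of_mul_mul_eq_one_of_sq_eq_one {M : Type*} [Monoid M] {a b c : M}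
    (h : a * b * c = 1) (ha : a ^ 2 = 1) (hb : b ^ 2 = 1) : c = b * a := by
  rw [sq] at ha hb
  calc c = b * (a * a) * b * c := by rw [ha, mul_one, hb, one_mul]
    _ = b * a * (a * b * c) := by simp only [mul_assoc]
    _ = b * a := by rw [h, mul_one]

theorem commute_of_sq_eq_one {M : Type*} [Monoid M] {a b : M} (ha : a ^ 2 = 1) (hb : b ^ 2 = 1)
    (hba : (b * a) ^ 2 = 1) : Commute a b := by
  rw [sq] at ha hb hba
  calc a * b = a * b * (b * a * (b * a)) := by rw [hba, mul_one]
    _ = a * (b * b) * a * (b * a) := by simp only [mul_assoc]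
    _ = b * a := by rw [hb, mul_one, ha, one_mul]

theorem IrredTuple.eq_one_of_forall_mulVec_eq_smul {s ℓ : ℕ} {A : Fin s → Mat ℓ}
    (hirr : IrredTuple A) {v : Fin ℓ → ℂ} (hv : v ≠ 0)
    (hA : ∀ i, ∃ μ : ℂ, A i *ᵥ v = μ • v) : ℓ = 1 := by
  have hinv : ∀ i, (ℂ ∙ v).map (Matrix.mulVecLin (A i)) ≤ ℂ ∙ v := by
    intro i
    rw [Submodule.map_span_le]
    rintro _ rfl
    obtain ⟨μ, hμ⟩ := hA i
    rw [mulVecLin_apply, hμ]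
    exact Submodule.smul_mem _ _ (Submodule.mem_span_singleton_self _)
  rcases hirr _ hinv with hbot | htop
  · exact absurd hbot (by simpa using hv)
  · have := finrank_span_singleton (K := ℂ) hv
    rwa [htop, finrank_top, Module.finrank_fin_fun] at this

theorem no_rank_gt_one_order_two_general (ℓ : ℕ) (hℓ : 0 < ℓ) (A : Fin 3 → Mat ℓ)
    (hprod : tupleProd A = 1) (hord : ∀ i, A i ^ 2 = 1)
    (hirr : IrredTuple A) : ℓ = 1 := by
  have : NeZero ℓ := ⟨hℓ.ne'⟩
  have h012 : A 0 * A 1 * A 2 = 1 := by simpa [tupleProd, List.ofFn_succ, mul_assoc] using hprod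
  have h2 : A 2 = A 1 * A 0 := eq_mul_of_mul_mul_eq_one_of_sq_eq_one h012 (hord 0) (hord 1)
  have hcomm : Commute (A 0) (A 1) := commute_of_sq_eq_one (hord 0) (hord 1) (h2 ▸ hord 2)
  obtain ⟨v, hv, μ, ν, hμ, hν⟩ :=
    Module.End.exists_common_eigenvector_of_commute (hcomm.map Matrix.toLinAlgEquiv')
  simp only [Matrix.toLinAlgEquiv'_apply] at hμ hν
  refine hirr.eq_one_of_forall_mulVec_eq_smul hv fun i => ?_
  fin_cases i
  · exact ⟨μ, hμ⟩
  · exact ⟨ν, hν⟩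
  · exact ⟨μ * ν, by simp [h2, ← mulVec_mulVec, hμ, hν, mulVec_smul, smul_smul]⟩

/-- **Theorem (Statement 10).** There are no unitary irreducible rigid tuples of rank
`> 1` on the 3-punctured sphere all of whose local monodromies square to the identity. -/
theorem no_rank_gt_one_order_two (ℓ : ℕ) (hℓ : 0 < ℓ) (A : Fin 3 → Mat ℓ)
    (hU : UnitaryTuple A) (hprod : tupleProd A = 1) (hord : ∀ i, A i ^ 2 = 1)
    (hirr : IrredTuple A) (hrig : RigidTuple A) : ℓ = 1 :=
  no_rank_gt_one_order_two_general ℓ hℓ A hprod hord hirr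
end
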